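/- For the complete independence model of I×J×K contingency tables with I, J, K ≥ 2 (A x given by the three one-dimensional marginals (x_{i··})_i, (x_{·j·})_j, (x_{··k})_k), let i₁ ≠ i₂, j₁ ≠ j₂, k₁ ≠ k₂. Then the fiber of t = A(e_{i₁j₁k₁}+e_{i₂j₂k₂}) is exactly the four-element set {e_{i₁j₁k₁}+e_{i₂j₂k₂}, e_{i₁j₁k₂}+e_{i₂j₂k₁}, e_{i₁j₂k₁}+e_{i₂j₁k₂}, e_{i₁j₂k₂}+e_{i₂j₁k₁}}, and each of these four frequency vectors is an indispensable monomial. -/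
import Mathlib


open scoped BigOperators

section Defs

variable {ι κ : Type*} [Fintype ι]

/-- Embed a frequency vector `x ∈ ℕ^ι` into `ℤ^ι`. -/
def natToInt (x : ι → ℕ) : ι → ℤ := fun i => (x i : ℤ)

/-- The fiber of `t`: all frequency vectors `x` with `A x = t`. -/
def fiberOf (A : Matrix κ ι ℤ) (t : κ → ℤ) : Set (ι → ℕ) :=
  {x | A.mulVec (natToInt x) = t}

/-- A move for `A`: an integer vector in the kernel of `A`. -/
def IsMove (A : Matrix κ ι ℤ) (z : ι → ℤ) : Prop := A.mulVec z = 0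

/-- The positive part `z⁺` of an integer vector, as a frequency vector. -/
def posOf (z : ι → ℤ) : ι → ℕ := fun i => (z i).toNat

/-- The negative part `z⁻` of an integer vector, as a frequency vector. -/
def negOf (z : ι → ℤ) : ι → ℕ := fun i => (-z i).toNat

/-- The degree of a move: `deg z = |z⁺|`. -/
def degOf (z : ι → ℤ) : ℕ := ∑ i, posOf z i

/-- One step: add or subtract one move of `B`, staying in `ℕ^ι`. -/
def MStep (B : Set (ι → ℤ)) (x y : ι → ℕ) : Prop :=
  ∃ z ∈ B, natToInt y = natToInt x + z ∨ natToInt y = natToInt x - z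

/-- `y` is accessible from `x` by the moves of `B` (staying nonnegative throughout,
since all intermediate points are frequency vectors). -/
def Accessible (B : Set (ι → ℤ)) : (ι → ℕ) → (ι → ℕ) → Prop :=
  Relation.ReflTransGen (MStep B)

/-- A Markov basis: a finite set of moves such that every fiber forms a single
equivalence class for mutual accessibility. -/
def IsMarkovBasis (A : Matrix κ ι ℤ) (B : Set (ι → ℤ)) : Prop :=
  B.Finite ∧ (∀ z ∈ B, IsMove A z) ∧
    ∀ t : κ → ℤ, ∀ x ∈ fiberOf A t, ∀ y ∈ fiberOf A t, Accessible B x y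

/-- A minimal Markov basis: no proper subset is a Markov basis. -/
def IsMinimalMarkovBasis (A : Matrix κ ι ℤ) (B : Set (ι → ℤ)) : Prop :=
  IsMarkovBasis A B ∧ ∀ B' ⊂ B, ¬ IsMarkovBasis A B'

/-- An indispensable monomial: every Markov basis contains a move whose
positive or negative part is `x`. -/
def IsIndispensableMonomial (A : Matrix κ ι ℤ) (x : ι → ℕ) : Prop :=
  ∀ B : Set (ι → ℤ), IsMarkovBasis A B → ∃ z ∈ B, posOf z = x ∨ negOf z = x

/-- `B_n`: the set of moves of degree at most `n`. -/
def Bmoves (A : Matrix κ ι ℤ) (n : ℕ) : Set (ι → ℤ) :=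
  {z | IsMove A z ∧ degOf z ≤ n}

/-- The sample size `|t|` of a sufficient statistic `t` (well defined on nonempty
fibers under homogeneity). -/
noncomputable def sampleSize (A : Matrix κ ι ℤ) (t : κ → ℤ) : ℕ :=
  sInf {n | ∃ x ∈ fiberOf A t, ∑ i, x i = n}

/-- The `B_{|t|-1}`-equivalence classes of the fiber of `t`. -/
noncomputable def fiberClasses (A : Matrix κ ι ℤ) (t : κ → ℤ) : Set (Set (ι → ℕ)) :=
  {C | ∃ x ∈ fiberOf A t,
    C = {y | y ∈ fiberOf A t ∧ Accessible (Bmoves A (sampleSize A t - 1)) x y}}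

/-- Homogeneity: some rational vector `w` has `w ⬝ aᵢ = 1` for every column `aᵢ`. -/
def IsHomogeneousMatrix [Fintype κ] (A : Matrix κ ι ℤ) : Prop :=
  ∃ w : κ → ℚ, ∀ i : ι, ∑ j, w j * (A j i : ℚ) = 1

end Defs

/-- The matrix of the complete independence model of `I×J×K` contingency tables:
the three one-dimensional marginals. -/
def AcompInd (I J K : ℕ) :
    Matrix (Fin I ⊕ (Fin J ⊕ Fin K)) (Fin I × Fin J × Fin K) ℤ :=
  fun r c =>
    match r with
    | Sum.inl i => if c.1 = i then 1 else 0
    | Sum.inr (Sum.inl j) => if c.2.1 = j then 1 else 0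
    | Sum.inr (Sum.inr k) => if c.2.2 = k then 1 else 0

/-- The degree-2 frequency vector with one count in cell `c` and one in cell `c'`. -/
def twoCells {I J K : ℕ} (c c' : Fin I × Fin J × Fin K) : Fin I × Fin J × Fin K → ℕ :=
  Pi.single c 1 + Pi.single c' 1

section AuxLemmas

open scoped BigOperators

variable {ι : Type*} [Fintype ι]

lemma aux_natToInt_inj {x y : ι → ℕ} (h : natToInt x = natToInt y) : x = y := by
  funext c
  have := congrFun h c
  simpa [natToInt] using this

lemma aux_sum_eq_one_single [DecidableEq ι] {f : ι → ℕ}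
    (h : ∑ c, f c = 1) : ∃ c, f = Pi.single c 1 := by
  have h0 : ∃ c, f c ≠ 0 := by
    by_contra hc
    push_neg at hc
    simp [hc] at h
  obtain ⟨c, hc⟩ := h0
  refine ⟨c, funext fun d => ?_⟩
  rcases eq_or_ne d c with rfl | hd
  · have h1 : f d ≤ 1 := h ▸ Finset.single_le_sum (fun i _ => Nat.zero_le _) (Finset.mem_univ d)
    simp [Pi.single_apply]; omega
  · have h2 : f c + f d ≤ ∑ c, f c := by
      have := Finset.sum_le_sum_of_subset (s := ({c, d} : Finset ι)) (t := Finset.univ)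
        (f := f) (Finset.subset_univ _)
      rwa [Finset.sum_pair (Ne.symm hd)] at this
    rw [h] at h2
    simp [Pi.single_apply, hd]; omega

lemma aux_sum_eq_two_decomp [DecidableEq ι] {f : ι → ℕ}
    (h : ∑ c, f c = 2) : ∃ c c', f = Pi.single c 1 + Pi.single c' 1 := by
  have h0 : ∃ c, f c ≠ 0 := by
    by_contra hc
    push_neg at hc
    simp [hc] at h
  obtain ⟨c, hc⟩ := h0
  set g : ι → ℕ := fun d => f d - (Pi.single c 1 : ι → ℕ) d with hg
  have hfd : ∀ d, f d = g d + (Pi.single c 1 : ι → ℕ) d := by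
    intro d
    rcases eq_or_ne d c with rfl | hd
    · simp [hg, Pi.single_apply]; omega
    · simp [hg, Pi.single_apply, hd]
  have hsg : ∑ c, g c = 1 := by
    have : ∑ d, f d = ∑ d, g d + ∑ d, (Pi.single c 1 : ι → ℕ) d := by
      rw [← Finset.sum_add_distrib]; exact Finset.sum_congr rfl fun d _ => hfd d
    rw [h, Finset.sum_pi_single'] at this
    simp at this; omega
  obtain ⟨c', hc'⟩ := aux_sum_eq_one_single hsg
  exact ⟨c, c', funext fun d => by rw [hfd d, hc']; simp [add_comm]⟩

lemma aux_eq_of_le_of_sum_eq {f g : ι → ℕ}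
    (hle : ∀ c, f c ≤ g c) (hs : ∑ c, f c = ∑ c, g c) : f = g := by
  funext d
  by_contra hd
  have : ∑ c, f c < ∑ c, g c :=
    Finset.sum_lt_sum (fun i _ => hle i) ⟨d, Finset.mem_univ d, lt_of_le_of_ne (hle d) hd⟩
  omega

lemma aux_pair_eq {α : Type*} [DecidableEq α] {a b y1 y2 : α} (hy : y1 ≠ y2)
    (H : ∀ i, ((if a = i then (1:ℤ) else 0) + (if b = i then 1 else 0))
      = (if y1 = i then 1 else 0) + (if y2 = i then 1 else 0)) :
    (a = y1 ∧ b = y2) ∨ (a = y2 ∧ b = y1) := by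
  have h1 := H y1
  have h2 := H y2
  split_ifs at h1 h2 <;> simp_all

lemma aux_exists_change_step {B : Set (ι → ℤ)} {x y : ι → ℕ}
    (h : Accessible B x y) (hxy : x ≠ y) :
    ∃ z ∈ B, ∃ x1 : ι → ℕ, x1 ≠ x ∧
      (natToInt x1 = natToInt x + z ∨ natToInt x1 = natToInt x - z) := by
  unfold Accessible at h
  induction h using Relation.ReflTransGen.head_induction_on with
  | refl => exact absurd rfl hxy
  | @head a c h' htail ih =>
    obtain ⟨z, hzB, hz⟩ := h'
    rcases eq_or_ne c a with rfl | hca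
    · exact ih hxy
    · exact ⟨z, hzB, c, hca, hz⟩

end AuxLemmas

section CompIndAux

open scoped BigOperators

variable {I J K : ℕ}

lemma aux_natToInt_twoCells (c c' : Fin I × Fin J × Fin K) :
    natToInt (twoCells c c') = Pi.single c (1:ℤ) + Pi.single c' 1 := by
  funext d
  simp only [natToInt, twoCells, Pi.add_apply, Pi.single_apply]
  split_ifs <;> simp

lemma aux_mulVec_twoCells (c c' : Fin I × Fin J × Fin K) :
    (AcompInd I J K).mulVec (natToInt (twoCells c c')) =
      fun r => AcompInd I J K r c + AcompInd I J K r c' := by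
  rw [aux_natToInt_twoCells, Matrix.mulVec_add, Matrix.mulVec_single, Matrix.mulVec_single]
  funext r
  simp

lemma aux_rowSum (w : Fin I × Fin J × Fin K → ℤ) :
    ∑ i : Fin I, (AcompInd I J K).mulVec w (Sum.inl i) = ∑ c, w c := by
  simp only [Matrix.mulVec, dotProduct, AcompInd]
  rw [Finset.sum_comm]
  apply Finset.sum_congr rfl
  intro c _
  simp [ite_mul, Finset.sum_ite_eq]

lemma aux_ker_sum {w : Fin I × Fin J × Fin K → ℤ}
    (hw : (AcompInd I J K).mulVec w = 0) : ∑ c, w c = 0 := by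
  rw [← aux_rowSum w, hw]
  simp

lemma aux_col_inj {c c' : Fin I × Fin J × Fin K}
    (h : ∀ r, AcompInd I J K r c = AcompInd I J K r c') : c = c' := by
  have e1 : c'.1 = c.1 := by
    by_contra hne; have h1 := h (Sum.inl c.1); simp [AcompInd, hne] at h1
  have e2 : c'.2.1 = c.2.1 := by
    by_contra hne; have h2 := h (Sum.inr (Sum.inl c.2.1)); simp [AcompInd, hne] at h2
  have e3 : c'.2.2 = c.2.2 := by
    by_contra hne; have h3 := h (Sum.inr (Sum.inr c.2.2)); simp [AcompInd, hne] at h3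
  exact Prod.ext e1.symm (Prod.ext e2.symm e3.symm)

lemma aux_neg_eq (x : Fin I × Fin J × Fin K → ℕ) (hs : ∑ c, x c = 2)
    (w : Fin I × Fin J × Fin K → ℤ) (hw : (AcompInd I J K).mulVec w = 0)
    (hw0 : w ≠ 0) (hle : ∀ c, negOf w c ≤ x c) : negOf w = x := by
  have hz : ∀ c, (posOf w c : ℤ) - (negOf w c : ℤ) = w c := by
    intro c
    exact Int.toNat_sub_toNat_neg (w c)
  have hsum0 : ∑ c, w c = 0 := aux_ker_sum hw
  have hpn : ∑ c, posOf w c = ∑ c, negOf w c := by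
    have h1 : ∑ c, ((posOf w c : ℤ) - (negOf w c : ℤ)) = 0 := by
      rw [Finset.sum_congr rfl fun c _ => hz c]; exact hsum0
    rw [Finset.sum_sub_distrib] at h1
    have : (↑(∑ c, posOf w c) : ℤ) = ↑(∑ c, negOf w c) := by push_cast; omega
    exact_mod_cast this
  have hm2 : ∑ c, negOf w c ≤ 2 := hs ▸ Finset.sum_le_sum (fun c _ => hle c)
  have hm0 : ∑ c, negOf w c ≠ 0 := by
    intro h0
    apply hw0
    have hneg : ∀ c, negOf w c = 0 := fun c =>
      (Finset.sum_eq_zero_iff.mp h0) c (Finset.mem_univ c)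
    have hpos : ∀ c, posOf w c = 0 := fun c =>
      (Finset.sum_eq_zero_iff.mp (hpn.trans h0)) c (Finset.mem_univ c)
    funext c
    have := hz c
    rw [hneg c, hpos c] at this
    simpa using this.symm
  rcases Nat.lt_or_ge (∑ c, negOf w c) 2 with hlt | hge
  · -- sum = 1 case: w is a difference of two unit vectors, contradiction
    exfalso
    have h1 : ∑ c, negOf w c = 1 := by omega
    obtain ⟨b, hb⟩ := aux_sum_eq_one_single h1
    obtain ⟨a, ha⟩ := aux_sum_eq_one_single (hpn.trans h1)
    have hwab : w = Pi.single a (1:ℤ) - Pi.single b 1 := by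
      funext d
      have := hz d
      rw [ha, hb] at this
      rw [← this]
      by_cases hda : d = a <;> by_cases hdb : d = b <;> simp [Pi.single_apply, hda, hdb]
    rw [hwab, Matrix.mulVec_sub, Matrix.mulVec_single, Matrix.mulVec_single] at hw
    have hcols : ∀ r, AcompInd I J K r a = AcompInd I J K r b := by
      intro r
      have := congrFun hw r
      simp at this
      omega
    have hab : a = b := aux_col_inj hcols
    apply hw0
    rw [hwab, hab]
    simp
  · have h2 : ∑ c, negOf w c = 2 := le_antisymm hm2 hge
    exact aux_eq_of_le_of_sum_eq hle (h2.trans hs.symm)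

lemma aux_sum_twoCells (c c' : Fin I × Fin J × Fin K) :
    ∑ d, twoCells c c' d = 2 := by
  simp [twoCells, Finset.sum_add_distrib, Finset.sum_pi_single']

lemma aux_twoCells_comm (c c' : Fin I × Fin J × Fin K) :
    twoCells c c' = twoCells c' c := add_comm _ _

lemma aux_twoCells_ne {c1 c2 d1 d2 : Fin I × Fin J × Fin K}
    (h1 : c1 ≠ d1) (h2 : c1 ≠ d2) : twoCells c1 c2 ≠ twoCells d1 d2 := by
  intro h
  have := congrFun h c1
  simp [twoCells, Pi.single_apply, h1, h2] at this

lemma aux_indisp_of (t : Fin I ⊕ (Fin J ⊕ Fin K) → ℤ)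
    {x y : Fin I × Fin J × Fin K → ℕ}
    (hx : x ∈ fiberOf (AcompInd I J K) t) (hy : y ∈ fiberOf (AcompInd I J K) t)
    (hxy : x ≠ y) (hs : ∑ c, x c = 2) :
    IsIndispensableMonomial (AcompInd I J K) x := by
  intro B hB
  obtain ⟨hBfin, hBmove, hBconn⟩ := hB
  have hacc := hBconn t x hx y hy
  obtain ⟨z, hzB, x1, hx1ne, hx1⟩ := aux_exists_change_step hacc hxy
  have hzker : (AcompInd I J K).mulVec z = 0 := hBmove z hzB
  rcases hx1 with h | h
  · refine ⟨z, hzB, Or.inr ?_⟩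
    apply aux_neg_eq x hs z hzker
    · intro h0
      apply hx1ne
      apply aux_natToInt_inj
      rw [h, h0]; simp
    · intro c
      have := congrFun h c
      simp [natToInt, negOf] at this ⊢
      omega
  · refine ⟨z, hzB, Or.inl ?_⟩
    have hker' : (AcompInd I J K).mulVec (-z) = 0 := by
      rw [Matrix.mulVec_neg, hzker]; simp
    have hne' : (-z) ≠ 0 := by
      intro h0
      apply hx1ne
      apply aux_natToInt_inj
      have : z = 0 := by simpa using congrArg Neg.neg h0
      rw [h, this]; simp
    have hle' : ∀ c, negOf (-z) c ≤ x c := by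
      intro c
      have := congrFun h c
      simp [natToInt, negOf] at this ⊢
      omega
    have := aux_neg_eq x hs (-z) hker' hne' hle'
    rw [← this]
    funext c
    simp [posOf, negOf]

end CompIndAux

/-- for the complete independence model of `I×J×K` tables and
`i₁ ≠ i₂`, `j₁ ≠ j₂`, `k₁ ≠ k₂`, the fiber of `A(e_{i₁j₁k₁}+e_{i₂j₂k₂})` is exactly
the listed four-element set, and each of the four vectors is an indispensable
monomial. -/
theorem four_element_fiber_completeIndependence
    {I J K : ℕ} (hI : 2 ≤ I) (hJ : 2 ≤ J) (hK : 2 ≤ K)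
    (i₁ i₂ : Fin I) (j₁ j₂ : Fin J) (k₁ k₂ : Fin K)
    (hi : i₁ ≠ i₂) (hj : j₁ ≠ j₂) (hk : k₁ ≠ k₂) :
    fiberOf (AcompInd I J K)
        ((AcompInd I J K).mulVec (natToInt (twoCells (i₁,j₁,k₁) (i₂,j₂,k₂)))) =
      {twoCells (i₁,j₁,k₁) (i₂,j₂,k₂), twoCells (i₁,j₁,k₂) (i₂,j₂,k₁),
        twoCells (i₁,j₂,k₁) (i₂,j₁,k₂), twoCells (i₁,j₂,k₂) (i₂,j₁,k₁)} ∧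
    IsIndispensableMonomial (AcompInd I J K) (twoCells (i₁,j₁,k₁) (i₂,j₂,k₂)) ∧
    IsIndispensableMonomial (AcompInd I J K) (twoCells (i₁,j₁,k₂) (i₂,j₂,k₁)) ∧
    IsIndispensableMonomial (AcompInd I J K) (twoCells (i₁,j₂,k₁) (i₂,j₁,k₂)) ∧
    IsIndispensableMonomial (AcompInd I J K) (twoCells (i₁,j₂,k₂) (i₂,j₁,k₁)) := by
  
  have hset : fiberOf (AcompInd I J K)
        ((AcompInd I J K).mulVec (natToInt (twoCells (i₁,j₁,k₁) (i₂,j₂,k₂)))) =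
      {twoCells (i₁,j₁,k₁) (i₂,j₂,k₂), twoCells (i₁,j₁,k₂) (i₂,j₂,k₁),
        twoCells (i₁,j₂,k₁) (i₂,j₁,k₂), twoCells (i₁,j₂,k₂) (i₂,j₁,k₁)} := by
    ext x
    simp only [Set.mem_insert_iff, Set.mem_singleton_iff]
    constructor
    · intro hx
      have hx' : (AcompInd I J K).mulVec (natToInt x)
          = (AcompInd I J K).mulVec (natToInt (twoCells (i₁,j₁,k₁) (i₂,j₂,k₂))) := hx
      have hsum : ∑ c, x c = 2 := by
        have h2 := aux_rowSum (I:=I) (J:=J) (K:=K) (natToInt x)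
        have h3 := aux_rowSum (I:=I) (J:=J) (K:=K) (natToInt (twoCells (i₁,j₁,k₁) (i₂,j₂,k₂)))
        have h4 : ∑ c, natToInt x c = ∑ c, natToInt (twoCells (i₁,j₁,k₁) (i₂,j₂,k₂)) c := by
          rw [← h2, ← h3]
          exact Finset.sum_congr rfl fun i _ => by rw [hx']
        have h5 : ∑ c, natToInt (twoCells (i₁,j₁,k₁) (i₂,j₂,k₂)) c = 2 := by
          have := aux_sum_twoCells (i₁,j₁,k₁) (i₂,j₂,k₂)
          simp only [natToInt]
          rw [← Nat.cast_sum, this]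
          rfl
        rw [h5] at h4
        have h6 : ((∑ c, x c : ℕ) : ℤ) = 2 := by
          rw [Nat.cast_sum]; exact h4
        exact_mod_cast h6
      obtain ⟨a, b, hab⟩ := aux_sum_eq_two_decomp hsum
      obtain ⟨ai, aj, ak⟩ := a
      obtain ⟨bi, bj, bk⟩ := b
      have hxe : x = twoCells (ai,aj,ak) (bi,bj,bk) := hab
      rw [hxe, aux_mulVec_twoCells, aux_mulVec_twoCells] at hx'
      have hcols : ∀ r, AcompInd I J K r (ai,aj,ak) + AcompInd I J K r (bi,bj,bk)
          = AcompInd I J K r (i₁,j₁,k₁) + AcompInd I J K r (i₂,j₂,k₂) :=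
        fun r => congrFun hx' r
      have hiI := aux_pair_eq hi (fun i => hcols (Sum.inl i))
      have hjJ := aux_pair_eq hj (fun j => hcols (Sum.inr (Sum.inl j)))
      have hkK := aux_pair_eq hk (fun k => hcols (Sum.inr (Sum.inr k)))
      rw [hxe]
      rcases hiI with ⟨e1, e2⟩ | ⟨e1, e2⟩ <;> rcases hjJ with ⟨f1, f2⟩ | ⟨f1, f2⟩ <;>
        rcases hkK with ⟨g1, g2⟩ | ⟨g1, g2⟩ <;>
        subst e1 <;> subst e2 <;> subst f1 <;> subst f2 <;> subst g1 <;> subst g2 <;>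
        first
          | exact Or.inl rfl
          | exact Or.inr (Or.inl rfl)
          | exact Or.inr (Or.inr (Or.inl rfl))
          | exact Or.inr (Or.inr (Or.inr rfl))
          | exact Or.inl (aux_twoCells_comm _ _)
          | exact Or.inr (Or.inl (aux_twoCells_comm _ _))
          | exact Or.inr (Or.inr (Or.inl (aux_twoCells_comm _ _)))
          | exact Or.inr (Or.inr (Or.inr (aux_twoCells_comm _ _)))
    · intro hx
      rcases hx with rfl | rfl | rfl | rfl
      · exact rfl
      all_goals {
        show (AcompInd I J K).mulVec (natToInt (twoCells _ _))
          = (AcompInd I J K).mulVec (natToInt (twoCells _ _))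
        rw [aux_mulVec_twoCells, aux_mulVec_twoCells]
        funext r
        rcases r with i | j | k <;> simp [AcompInd] <;> ring }
  have nei : ∀ (j j' : Fin J) (k k' : Fin K),
      ((i₁,j,k) : Fin I × Fin J × Fin K) ≠ (i₂,j',k') :=
    fun j j' k k' h => hi (congrArg Prod.fst h)
  have nek : ∀ (i : Fin I) (j : Fin J), ((i,j,k₁) : Fin I × Fin J × Fin K) ≠ (i,j,k₂) :=
    fun i j h => hk (congrArg (fun p => p.2.2) h)
  have nek' : ∀ (i : Fin I) (j : Fin J), ((i,j,k₂) : Fin I × Fin J × Fin K) ≠ (i,j,k₁) :=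
    fun i j h => hk (congrArg (fun p => p.2.2) h).symm
  have hm1 : twoCells (i₁,j₁,k₁) (i₂,j₂,k₂) ∈ fiberOf (AcompInd I J K)
      ((AcompInd I J K).mulVec (natToInt (twoCells (i₁,j₁,k₁) (i₂,j₂,k₂)))) := by
    rw [hset]; exact Or.inl rfl
  have hm2 : twoCells (i₁,j₁,k₂) (i₂,j₂,k₁) ∈ fiberOf (AcompInd I J K)
      ((AcompInd I J K).mulVec (natToInt (twoCells (i₁,j₁,k₁) (i₂,j₂,k₂)))) := by
    rw [hset]; exact Or.inr (Or.inl rfl)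
  have hm3 : twoCells (i₁,j₂,k₁) (i₂,j₁,k₂) ∈ fiberOf (AcompInd I J K)
      ((AcompInd I J K).mulVec (natToInt (twoCells (i₁,j₁,k₁) (i₂,j₂,k₂)))) := by
    rw [hset]; exact Or.inr (Or.inr (Or.inl rfl))
  have hm4 : twoCells (i₁,j₂,k₂) (i₂,j₁,k₁) ∈ fiberOf (AcompInd I J K)
      ((AcompInd I J K).mulVec (natToInt (twoCells (i₁,j₁,k₁) (i₂,j₂,k₂)))) := by
    rw [hset]; exact Or.inr (Or.inr (Or.inr rfl))
  refine ⟨hset, ?_, ?_, ?_, ?_⟩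
  · exact aux_indisp_of _ hm1 hm2
      (aux_twoCells_ne (nek i₁ j₁) (nei j₁ j₂ k₁ k₁)) (aux_sum_twoCells _ _)
  · exact aux_indisp_of _ hm2 hm1
      (aux_twoCells_ne (nek' i₁ j₁) (nei j₁ j₂ k₂ k₂)) (aux_sum_twoCells _ _)
  · exact aux_indisp_of _ hm3 hm4
      (aux_twoCells_ne (nek i₁ j₂) (nei j₂ j₁ k₁ k₁)) (aux_sum_twoCells _ _)
  · exact aux_indisp_of _ hm4 hm3
      (aux_twoCells_ne (nek' i₁ j₂) (nei j₂ j₁ k₂ k₂)) (aux_sum_twoCells _ _)
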